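/- For natural numbers n and j and complex number a such that (2a-j)_k ≠ 0 for 0 ≤ k ≤ 2n+1, ∑_{k=0}^{2n+1} (-2n-1)_k (a)_k 2^k / ((2a-j)_k k!) = -(2^{2n} (3/2)_n / (2a-j)_{2n+1}) · ∑_{r=0}^{min(⌊j/2⌋,n)} (-1)^r C(j,2r+1) (-n)_r (a)_{n-r}. -/

import Mathlib

/-!
Multiplying by `(c)_N` turns `₂F₁(-N, a; c; z)` into the polynomial
`G_N(a, c) = ∑ₖ (-z)ᵏ C(N,k) (a)ₖ (c+k)_{N-k}`, and Pascal's rule gives the contiguous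
relation `G_{N+1}(a, c) = (c + N) G_N(a, c) - z a G_N(a+1, c+1)`.
For `z = 2` and `c = 2a - j` the shift `(a, c) ↦ (a+1, c+1)` is `(a, j) ↦ (a+1, j+1)`, so the
closed forms for even and odd `N` (read off from the exponential generating function
`(1-x)ʲ (1-x²)⁻ᵃ`) follow by induction on `N`, each step being a telescoping sum over `r`.
-/

open Finset

/-- The Pochhammer symbol (rising factorial) `(x)_k = x (x+1) ⋯ (x+k-1)`. -/
noncomputable def poch (x : ℂ) (k : ℕ) : ℂ := (ascPochhammer ℂ k).eval x

lemma poch_zero (x : ℂ) : poch x 0 = 1 := by simp [poch]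

lemma poch_succ (x : ℂ) (k : ℕ) : poch x (k + 1) = poch x k * (x + k) :=
  ascPochhammer_succ_eval k x

lemma poch_succ_left (x : ℂ) (k : ℕ) : poch x (k + 1) = x * poch (x + 1) k := by
  simp [poch, ascPochhammer_succ_left, Polynomial.eval_comp]

lemma poch_add (x : ℂ) (m k : ℕ) : poch x (m + k) = poch x m * poch (x + m) k := by
  simpa [poch] using (congrArg (Polynomial.eval x) (ascPochhammer_mul ℂ m k)).symm

lemma poch_neg_natCast (N k : ℕ) : poch (-N) k = (-1) ^ k * N.descFactorial k := by
  rw [poch, ascPochhammer_eval_neg_eq_descPochhammer, descPochhammer_eval_eq_descFactorial]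

lemma poch_three_halves (n : ℕ) : poch (3 / 2) n = (2 * n + 1) * poch (1 / 2) n := by
  have h := (poch_succ_left (1 / 2) n).symm.trans (poch_succ (1 / 2) n)
  norm_num at h
  linear_combination 2 * h

lemma Nat.cast_choose_succ_right_eq {R : Type*} [CommRing R] (j k : ℕ) :
    (j.choose (k + 1) : R) * (k + 1) = j.choose k * (j - k) := by
  rcases le_or_gt k j with hkj | hjk
  · exact_mod_cast congrArg (Nat.cast : ℕ → R) (Nat.choose_succ_right_eq j k) |>.trans
      (by push_cast [hkj]; ring)
  · simp [Nat.choose_eq_zero_of_lt hjk, Nat.choose_eq_zero_of_lt (hjk.trans (Nat.lt_succ_self k))]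

lemma Finset.sum_range_eq_add_sub_of_telescoping {M : Type*} [AddCommGroup M] {f g B : ℕ → M}
    {N : ℕ} (h : ∀ r < N, f r = g r + (B (r + 1) - B r)) :
    ∑ r ∈ range N, f r = ∑ r ∈ range N, g r + (B N - B 0) := by
  rw [sum_congr rfl fun r hr => h r (mem_range.1 hr), sum_add_distrib, sum_range_sub]

/-- `(c)_N · ₂F₁(-N, a; c; z)`, which is a polynomial in `a`, `c` and `z`. -/
noncomputable def hyp2F1Num (z : ℂ) (N : ℕ) (a c : ℂ) : ℂ :=
  ∑ k ∈ range (N + 1), (-z) ^ k * N.choose k * poch a k * poch (c + k) (N - k)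

lemma sum_hyp2F1_eq_hyp2F1Num_div (z a c : ℂ) (N : ℕ) (hc : poch c N ≠ 0) :
    ∑ k ∈ range (N + 1), poch (-N) k * poch a k * z ^ k / (poch c k * k.factorial)
      = hyp2F1Num z N a c / poch c N := by
  rw [eq_div_iff hc, sum_mul, hyp2F1Num]
  refine sum_congr rfl fun k hk => ?_
  obtain ⟨m, rfl⟩ := Nat.exists_eq_add_of_le (Nat.lt_succ_iff.1 (mem_range.1 hk))
  have hsplit := poch_add c k m
  have hck : poch c k ≠ 0 := left_ne_zero_of_mul (hsplit ▸ hc)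
  have hdesc : ((k + m).descFactorial k : ℂ) = k.factorial * (k + m).choose k := by
    exact_mod_cast Nat.descFactorial_eq_factorial_mul_choose (k + m) k
  have hfac : (k.factorial : ℂ) ≠ 0 := by exact_mod_cast k.factorial_ne_zero
  rw [poch_neg_natCast, hdesc, hsplit, Nat.add_sub_cancel_left, neg_pow z]
  field_simp

lemma hyp2F1Num_succ (z : ℂ) (N : ℕ) (a c : ℂ) :
    hyp2F1Num z (N + 1) a c
      = (c + N) * hyp2F1Num z N a c - z * a * hyp2F1Num z N (a + 1) (c + 1) := by
  let f : ℕ → ℕ → ℂ := fun i l => (-z) ^ i * poch a i * poch (c + i) l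
  have hsplit := sum_choose_succ_mul f N
  have hlhs : hyp2F1Num z (N + 1) a c
      = ∑ i ∈ range (N + 2), ((N + 1).choose i : ℂ) * f i (N + 1 - i) := by
    simp only [hyp2F1Num, f]
    exact sum_congr rfl fun _ _ => by ring
  have hfirst : ∑ i ∈ range (N + 1), (N.choose i : ℂ) * f i (N + 1 - i)
      = (c + N) * hyp2F1Num z N a c := by
    rw [hyp2F1Num, mul_sum]
    refine sum_congr rfl fun i hi => ?_
    obtain ⟨m, rfl⟩ := Nat.exists_eq_add_of_le (Nat.lt_succ_iff.1 (mem_range.1 hi))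
    simp only [f, show i + m + 1 - i = m + 1 by omega, Nat.add_sub_cancel_left, poch_succ]
    push_cast
    ring
  have hsecond : ∑ i ∈ range (N + 1), (N.choose i : ℂ) * f (i + 1) (N - i)
      = -(z * a * hyp2F1Num z N (a + 1) (c + 1)) := by
    rw [hyp2F1Num, mul_sum, ← sum_neg_distrib]
    refine sum_congr rfl fun i _ => ?_
    simp only [f, poch_succ_left a i]
    push_cast
    ring_nf
  rw [hlhs, hsplit, hfirst, hsecond, sub_eq_add_neg]

noncomputable def evenSum (n : ℕ) (a : ℂ) (j : ℕ) : ℂ :=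
  ∑ r ∈ range (n + 1), (j.choose (2 * r) : ℂ) * n.descFactorial r * poch a (n - r)

noncomputable def oddSum (n : ℕ) (a : ℂ) (j : ℕ) : ℂ :=
  ∑ r ∈ range (n + 1), (j.choose (2 * r + 1) : ℂ) * n.descFactorial r * poch a (n - r)

lemma evenSum_contiguous (n : ℕ) (a : ℂ) (j : ℕ) :
    (2 * a - j + 2 * n) * evenSum n a j - 2 * a * evenSum n (a + 1) (j + 1)
      = -(2 * n + 1) * oddSum n a j := by
  let B : ℕ → ℂ := fun r =>
    2 * ((j + 1).choose (2 * r) - j.choose (2 * r) : ℂ) * n.descFactorial r * poch a (n + 1 - r)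
  have hB0 : B 0 = 0 := by simp [B]
  have hBn : B (n + 1) = 0 := by simp [B]
  rw [evenSum, evenSum, oddSum, mul_sum, mul_sum, mul_sum, ← sum_sub_distrib,
    sum_range_eq_add_sub_of_telescoping (B := B), hB0, hBn, sub_zero, add_zero]
  intro r hr
  obtain ⟨m, rfl⟩ := Nat.exists_eq_add_of_le (Nat.lt_succ_iff.1 hr)
  have hd : ((r + m).descFactorial (r + 1) : ℂ) = (r + m).descFactorial r * m := by
    rw [Nat.descFactorial_succ, Nat.add_sub_cancel_left]; push_cast; ring
  have hshift : poch a (m + 1) = a * poch (a + 1) m := poch_succ_left a m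
  have hpascal :
      ((j + 1).choose (2 * (r + 1)) : ℂ) = j.choose (2 * r + 1) + j.choose (2 * (r + 1)) := by
    rw [show 2 * (r + 1) = 2 * r + 1 + 1 by ring, Nat.choose_succ_succ, Nat.cast_add]
  have habs := Nat.cast_choose_succ_right_eq (R := ℂ) j (2 * r)
  simp only [B, show r + m + 1 - r = m + 1 by omega, show r + m + 1 - (r + 1) = m by omega,
    Nat.add_sub_cancel_left, hd, poch_succ] at hshift ⊢
  push_cast at habs ⊢
  linear_combination (2 * ((j + 1).choose (2 * r) : ℂ) * (r + m).descFactorial r) * hshift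
    + ((r + m).descFactorial r * poch a m : ℂ) * habs
    - (2 * (r + m).descFactorial r * m * poch a m : ℂ) * hpascal

lemma oddSum_contiguous (n : ℕ) (a : ℂ) (j : ℕ) :
    (2 * a - j + (2 * n + 1)) * oddSum n a j - 2 * a * oddSum n (a + 1) (j + 1)
      = -2 * evenSum (n + 1) a j := by
  let B : ℕ → ℂ := fun r => -2 * j.choose (2 * r)
      * ((n + 1).descFactorial r - n.descFactorial r : ℂ) * poch a (n + 1 - r)
  have hB0 : B 0 = 0 := by simp [B]
  have hBn : B (n + 1) = -2 * (j.choose (2 * (n + 1)) * (n + 1).descFactorial (n + 1)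
      * poch a (n + 1 - (n + 1))) := by
    simp [B]; ring
  rw [oddSum, oddSum, evenSum, sum_range_succ _ (n + 1), mul_add, ← hBn, mul_sum, mul_sum,
    mul_sum, ← sum_sub_distrib, sum_range_eq_add_sub_of_telescoping (B := B), hB0, sub_zero]
  intro r hr
  obtain ⟨m, rfl⟩ := Nat.exists_eq_add_of_le (Nat.lt_succ_iff.1 hr)
  have hd : ((r + m).descFactorial (r + 1) : ℂ) = (r + m).descFactorial r * m := by
    rw [Nat.descFactorial_succ, Nat.add_sub_cancel_left]; push_cast; ring
  have hd' : ((r + m + 1).descFactorial (r + 1) : ℂ) = (r + m + 1) * (r + m).descFactorial r := by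
    rw [Nat.succ_descFactorial_succ]; push_cast; ring
  have hshift : poch a (m + 1) = a * poch (a + 1) m := poch_succ_left a m
  have hpascal : ((j + 1).choose (2 * r + 1) : ℂ) = j.choose (2 * r) + j.choose (2 * r + 1) := by
    rw [Nat.choose_succ_succ', Nat.cast_add]
  have habs := Nat.cast_choose_succ_right_eq (R := ℂ) j (2 * r + 1)
  rw [show 2 * r + 1 + 1 = 2 * (r + 1) by ring] at habs
  simp only [B, show r + m + 1 - r = m + 1 by omega, show r + m + 1 - (r + 1) = m by omega,
    Nat.add_sub_cancel_left, hd, hd', poch_succ] at hshift ⊢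
  push_cast at habs ⊢
  linear_combination (2 * ((j + 1).choose (2 * r + 1) : ℂ) * (r + m).descFactorial r) * hshift
    - (2 * (r + m).descFactorial r * poch a m * (a + m) : ℂ) * hpascal
    + ((r + m).descFactorial r * poch a m : ℂ) * habs

lemma hyp2F1Num_two_succ (N : ℕ) (a : ℂ) (j : ℕ) :
    hyp2F1Num 2 (N + 1) a (2 * a - j) = (2 * a - j + N) * hyp2F1Num 2 N a (2 * a - j)
      - 2 * a * hyp2F1Num 2 N (a + 1) (2 * (a + 1) - (j + 1 : ℕ)) := by
  rw [hyp2F1Num_succ]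
  congr 3
  push_cast
  ring

lemma hyp2F1Num_two_odd_of_even {n : ℕ}
    (heven : ∀ (a : ℂ) (j : ℕ),
      hyp2F1Num 2 (2 * n) a (2 * a - j) = 2 ^ (2 * n) * poch (1 / 2) n * evenSum n a j)
    (a : ℂ) (j : ℕ) :
    hyp2F1Num 2 (2 * n + 1) a (2 * a - j) = -(2 ^ (2 * n) * poch (3 / 2) n * oddSum n a j) := by
  rw [hyp2F1Num_two_succ, heven, heven, poch_three_halves]
  push_cast
  linear_combination 2 ^ (2 * n) * poch (1 / 2) n * evenSum_contiguous n a j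

lemma hyp2F1Num_two_even (n : ℕ) (a : ℂ) (j : ℕ) :
    hyp2F1Num 2 (2 * n) a (2 * a - j) = 2 ^ (2 * n) * poch (1 / 2) n * evenSum n a j := by
  induction n generalizing a j with
  | zero => simp [hyp2F1Num, evenSum, poch_zero]
  | succ n ih =>
    have hodd := hyp2F1Num_two_odd_of_even ih
    have hhalf : poch (1 / 2) (n + 1) = 1 / 2 * poch (3 / 2) n := by
      rw [poch_succ_left]; norm_num
    rw [show 2 * (n + 1) = 2 * n + 1 + 1 by ring, hyp2F1Num_two_succ, hodd, hodd, hhalf]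
    push_cast
    linear_combination -(2 ^ (2 * n) * poch (3 / 2) n) * oddSum_contiguous n a j

lemma sum_range_min_eq_oddSum (n j : ℕ) (a : ℂ) :
    ∑ r ∈ range (min (j / 2) n + 1),
        (-1 : ℂ) ^ r * (j.choose (2 * r + 1) : ℂ) * poch (-(n : ℂ)) r * poch a (n - r)
      = oddSum n a j := by
  rw [oddSum]
  refine sum_subset (range_subset_range.2 (by omega)) (fun r hr hr' => ?_) |>.trans
    (sum_congr rfl fun r _ => ?_)
  · have : j < 2 * r + 1 := by simp only [mem_range] at hr hr'; omega
    simp [Nat.choose_eq_zero_of_lt this]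
  · have hsign : (-1 : ℂ) ^ r * (-1) ^ r = 1 := by rw [← mul_pow]; norm_num
    rw [poch_neg_natCast]
    linear_combination (j.choose (2 * r + 1) * n.descFactorial r * poch a (n - r) : ℂ) * hsign

theorem twoF1_neg2np1_a_twoAmj (n j : ℕ) (a : ℂ)
    (h : ∀ k ≤ 2 * n + 1, poch (2 * a - j) k ≠ 0) :
    ∑ k ∈ range (2 * n + 2),
        poch (-(2 * n : ℂ) - 1) k * poch a k * 2 ^ k /
          (poch (2 * a - j) k * (k.factorial : ℂ))
      = -((2 : ℂ) ^ (2 * n) * poch (3 / 2) n / poch (2 * a - j) (2 * n + 1) *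
          ∑ r ∈ range (min (j / 2) n + 1),
            (-1 : ℂ) ^ r * (j.choose (2 * r + 1) : ℂ) * poch (-(n : ℂ)) r *
              poch a (n - r)) := by
  have hN : -(2 * n : ℂ) - 1 = -((2 * n + 1 : ℕ) : ℂ) := by push_cast; ring
  rw [hN, sum_hyp2F1_eq_hyp2F1Num_div 2 a _ _ (h _ le_rfl),
    hyp2F1Num_two_odd_of_even (hyp2F1Num_two_even n), sum_range_min_eq_oddSum]
  ring
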